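/- Let G be a connected r-regular graph (r ≥ 3) on p vertices with a 2-cut {u,v}. If p > 2 + 2r, then there exist two distinct vertices with no common neighbour. -/

import Mathlib

open SimpleGraph Finset

/-- A connected `r`-regular graph (`r ≥ 3`) on `p > 2 + 2r` vertices with a
2-cut `{u, v}` has two distinct vertices with no common neighbour. -/
theorem stmt_2 {V : Type*} [Fintype V] [DecidableEq V]
    (G : SimpleGraph V) [DecidableRel G.Adj] (r : ℕ) (hr : 3 ≤ r)
    (hreg : G.IsRegularOfDegree r)
    (hconn : G.Connected)
    (u v : V) (huv : u ≠ v)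
    (hcut : ¬ (G.induce {w : V | w ≠ u ∧ w ≠ v}).Connected)
    (hp : Fintype.card V > 2 + 2 * r) :
    ∃ w x : V, w ≠ x ∧ (G.neighborFinset w ∩ G.neighborFinset x) = ∅ := by
  classical
  set S : Set V := {w : V | w ≠ u ∧ w ≠ v} with hS
  set T : Finset V := G.neighborFinset u ∪ G.neighborFinset v ∪ {u, v} with hT
  have hTcard : T.card ≤ 2 + 2 * r := by
    have h1 : (G.neighborFinset u).card = r := hreg u
    have h2 : (G.neighborFinset v).card = r := hreg v
    calc T.card ≤ (G.neighborFinset u ∪ G.neighborFinset v).card + ({u, v} : Finset V).card :=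
          card_union_le _ _
      _ ≤ ((G.neighborFinset u).card + (G.neighborFinset v).card) + 2 := by
          have := card_union_le (G.neighborFinset u) (G.neighborFinset v)
          have h3 : ({u, v} : Finset V).card ≤ 2 := card_insert_le _ _ |>.trans (by simp)
          omega
      _ ≤ 2 + 2 * r := by omega
  have hTne : T ≠ Finset.univ := by
    intro h
    rw [h, Finset.card_univ] at hTcard
    omega
  obtain ⟨w, hwT⟩ : ∃ w, w ∉ T := by
    by_contra h
    push_neg at h
    exact hTne (Finset.eq_univ_iff_forall.mpr h)
  have hwu : w ≠ u := by rintro rfl; exact hwT (by simp [hT])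
  have hwv : w ≠ v := by rintro rfl; exact hwT (by simp [hT])
  have hwau : ¬ G.Adj u w := by
    intro h; exact hwT (by simp [hT, SimpleGraph.mem_neighborFinset, h])
  have hwav : ¬ G.Adj v w := by
    intro h; exact hwT (by simp [hT, SimpleGraph.mem_neighborFinset, h])
  have hwS : w ∈ S := ⟨hwu, hwv⟩
  rw [connected_iff] at hcut
  push_neg at hcut
  have hnp : ¬ (G.induce S).Preconnected := by
    intro hpc; exact IsEmpty.elim (hcut hpc) (⟨w, hwS⟩ : S)
  rw [SimpleGraph.Preconnected] at hnp
  push_neg at hnp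
  obtain ⟨a, b, hab⟩ := hnp
  -- pick x not reachable from w
  obtain ⟨x, hx⟩ : ∃ x : S, ¬ (G.induce S).Reachable ⟨w, hwS⟩ x := by
    by_cases hra : (G.induce S).Reachable ⟨w, hwS⟩ a
    · exact ⟨b, fun h => hab (hra.symm.trans h)⟩
    · exact ⟨a, hra⟩
  refine ⟨w, x, ?_, ?_⟩
  · intro h
    have he : (⟨w, hwS⟩ : S) = x := Subtype.ext h
    exact hx (he ▸ SimpleGraph.Reachable.refl _)
  · ext y
    simp only [Finset.mem_inter, SimpleGraph.mem_neighborFinset, Finset.notMem_empty,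
      iff_false, not_and]
    intro hwy hxy
    have hyu : y ≠ u := by rintro rfl; exact hwau hwy.symm
    have hyv : y ≠ v := by rintro rfl; exact hwav hwy.symm
    have hyS : y ∈ S := ⟨hyu, hyv⟩
    have h1 : (G.induce S).Adj ⟨w, hwS⟩ ⟨y, hyS⟩ := hwy
    have h2 : (G.induce S).Adj ⟨y, hyS⟩ x := hxy.symm
    exact hx (h1.reachable.trans h2.reachable)
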